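/- arXiv:1112.0162 — 5 statements merged into one kernel-verified Lean document; each statement's English description precedes it below -/
import Mathlib

section
/- Let n ≥ 1 and let A : ℝ × ℝⁿ → ℝⁿ and V : ℝ × ℝⁿ → ℝ be twice continuously differentiable. Define F^a(t,x,v) = Σ_b (∂A^b/∂x^a − ∂A^a/∂x^b)(t,x) v^b − ∂V/∂x^a(t,x) − ∂A^a/∂t(t,x) and Γ^a_b(t,x) = (1/2)(∂A^a/∂x^b − ∂A^b/∂x^a)(t,x). Then the Jacobi endomorphism Φ^a_c(t,x,v) := −∂F^a/∂x^c(t,x,v) − Σ_b Γ^a_b(t,x) Γ^b_c(t,x) − (∂Γ^a_c/∂t(t,x) + Σ_b v^b ∂Γ^a_c/∂x^b(t,x)) is symmetric: Φ^a_c(t,x,v) = Φ^c_a(t,x,v) for all (t,x,v). -/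
/-! With `B_ab = ∂_a A^b - ∂_b A^a` and `E_a = -∂_a V - ∂_t A^a`, the force is
`F^a = B_ab v^b + E_a` and `Γ = -B/2`. Since `Γ` is skew, `Γ²` is symmetric, and the
antisymmetric part `Φ_ac - Φ_ca` equals
`-v^b (∂_c B_ab + ∂_a B_bc + ∂_b B_ca) - (∂_c E_a - ∂_a E_c - ∂_t B_ac)`,
which vanishes by the Bianchi identity and Faraday's law; both are the symmetry of the second
derivatives of `A` and `V`. -/

open Finset
open scoped Matrix

section SecondDerivative

variable {𝕜 E F : Type*} [NontriviallyNormedField 𝕜] [NormedAddCommGroup E] [NormedSpace 𝕜 E]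
  [NormedAddCommGroup F] [NormedSpace 𝕜 F]

theorem hasFDerivAt_fderiv_apply_const {f : E → F} {q : E}
    (hf : DifferentiableAt 𝕜 (fderiv 𝕜 f) q) (w : E) :
    HasFDerivAt (fun p => fderiv 𝕜 f p w) ((fderiv 𝕜 (fderiv 𝕜 f) q).flip w) q := by
  simpa using hf.hasFDerivAt.clm_apply (hasFDerivAt_const w q)

theorem ContDiff.differentiableAt_fderiv {f : E → F} (hf : ContDiff 𝕜 2 f) (q : E) :
    DifferentiableAt 𝕜 (fderiv 𝕜 f) q :=
  (hf.fderiv_right (m := 1) le_rfl).differentiable one_ne_zero q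

theorem ContDiff.fderiv_fderiv_swap [IsRCLikeNormedField 𝕜] {f : E → F} (hf : ContDiff 𝕜 2 f)
    (q u w : E) : fderiv 𝕜 (fderiv 𝕜 f) q u w = fderiv 𝕜 (fderiv 𝕜 f) q w u :=
  hf.contDiffAt.isSymmSndFDerivAt (by simp) u w

end SecondDerivative

theorem Matrix.isSymm_mul_self_of_transpose_eq_neg {n R : Type*} [Fintype n] [CommRing R]
    {M : Matrix n n R} (hM : Mᵀ = -M) : (M * M).IsSymm := by
  rw [IsSymm, transpose_mul, hM, neg_mul_neg]

theorem fderiv_sum_mul_add_apply {T X ι : Type*} [NormedAddCommGroup T] [NormedSpace ℝ T]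
    [NormedAddCommGroup X] [NormedSpace ℝ X] [Fintype ι] {m : ι → T × X → ℝ} {k : T × X → ℝ}
    {t : T} {x : X} (hm : ∀ i, DifferentiableAt ℝ (m i) (t, x))
    (hk : DifferentiableAt ℝ k (t, x)) (v : ι → ℝ) (s : T) (w : X) :
    fderiv ℝ (fun p : T × X × (ι → ℝ) => ∑ i, m i (p.1, p.2.1) * p.2.2 i + k (p.1, p.2.1))
        (t, x, v) (s, w, 0) =
      ∑ i, fderiv ℝ (m i) (t, x) (s, w) * v i + fderiv ℝ k (t, x) (s, w) := by
  have hbase : HasFDerivAt (fun p : T × X × (ι → ℝ) => (p.1, p.2.1)) _ (t, x, v) :=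
    hasFDerivAt_fst.prodMk (hasFDerivAt_snd (𝕜 := ℝ)).fst
  have hvel : ∀ i, HasFDerivAt (fun p : T × X × (ι → ℝ) => p.2.2 i) _ (t, x, v) := fun i =>
    hasFDerivAt_pi'.mp (hasFDerivAt_id (𝕜 := ℝ) (t, x, v)).snd.snd i
  have h : HasFDerivAt
      (fun p : T × X × (ι → ℝ) => ∑ i, m i (p.1, p.2.1) * p.2.2 i + k (p.1, p.2.1)) _ (t, x, v) :=
    (HasFDerivAt.fun_sum fun i (_ : i ∈ univ) =>
      ((hm i).hasFDerivAt.comp (t, x, v) hbase).fun_mul (hvel i)).fun_add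
        (hk.hasFDerivAt.comp (t, x, v) hbase)
  rw [h.fderiv]
  simp [mul_comm]

noncomputable section Electromagnetism

variable {ι : Type*} [DecidableEq ι]

def magneticField (A : ℝ × (ι → ℝ) → ι → ℝ) (q : ℝ × (ι → ℝ)) : Matrix ι ι ℝ :=
  Matrix.of fun a b => fderiv ℝ (fun p => A p b) q (0, Pi.single a 1)
    - fderiv ℝ (fun p => A p a) q (0, Pi.single b 1)

def electricField (A : ℝ × (ι → ℝ) → ι → ℝ) (V : ℝ × (ι → ℝ) → ℝ) (q : ℝ × (ι → ℝ)) :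
    ι → ℝ :=
  fun a => -fderiv ℝ V q (0, Pi.single a 1) - fderiv ℝ (fun p => A p a) q (1, 0)

def lorentzForce [Fintype ι] (A : ℝ × (ι → ℝ) → ι → ℝ) (V : ℝ × (ι → ℝ) → ℝ)
    (p : ℝ × (ι → ℝ) × (ι → ℝ)) : ι → ℝ :=
  fun a => ∑ b, magneticField A (p.1, p.2.1) a b * p.2.2 b + electricField A V (p.1, p.2.1) a

variable {A : ℝ × (ι → ℝ) → ι → ℝ} {V : ℝ × (ι → ℝ) → ℝ}

theorem magneticField_apply_swap (q : ℝ × (ι → ℝ)) (a b : ι) :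
    magneticField A q b a = -magneticField A q a b := by
  simp [magneticField]

theorem magneticField_transpose (q : ℝ × (ι → ℝ)) : (magneticField A q)ᵀ = -magneticField A q := by
  ext a b
  rw [Matrix.transpose_apply, Matrix.neg_apply, magneticField_apply_swap]

variable [Fintype ι]

theorem fderiv_magneticField_apply_swap (q u : ℝ × (ι → ℝ)) (a b : ι) :
    fderiv ℝ (fun p => magneticField A p b a) q u
      = -fderiv ℝ (fun p => magneticField A p a b) q u := by
  simp only [magneticField_apply_swap _ a b, fderiv_fun_neg, neg_apply]

theorem hasFDerivAt_magneticField_apply (hA : ContDiff ℝ 2 A) (a b : ι) (q : ℝ × (ι → ℝ)) :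
    HasFDerivAt (fun p => magneticField A p a b)
      ((fderiv ℝ (fderiv ℝ fun p => A p b) q).flip (0, Pi.single a 1)
        - (fderiv ℝ (fderiv ℝ fun p => A p a) q).flip (0, Pi.single b 1)) q := by
  have hAi (i : ι) := (contDiff_pi.mp hA i).differentiableAt_fderiv q
  exact (hasFDerivAt_fderiv_apply_const (hAi b) _).sub (hasFDerivAt_fderiv_apply_const (hAi a) _)

theorem hasFDerivAt_electricField_apply (hA : ContDiff ℝ 2 A) (hV : ContDiff ℝ 2 V) (a : ι)
    (q : ℝ × (ι → ℝ)) :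
    HasFDerivAt (fun p => electricField A V p a)
      (-(fderiv ℝ (fderiv ℝ V) q).flip (0, Pi.single a 1)
        - (fderiv ℝ (fderiv ℝ fun p => A p a) q).flip (1, 0)) q :=
  (hasFDerivAt_fderiv_apply_const (hV.differentiableAt_fderiv q) _).neg.sub
    (hasFDerivAt_fderiv_apply_const ((contDiff_pi.mp hA a).differentiableAt_fderiv q) _)

theorem fderiv_lorentzForce_apply (hA : ContDiff ℝ 2 A) (hV : ContDiff ℝ 2 V) (a : ι)
    (t : ℝ) (x v w : ι → ℝ) :
    fderiv ℝ (fun p => lorentzForce A V p a) (t, x, v) (0, w, 0) =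
      ∑ b, fderiv ℝ (fun p => magneticField A p a b) (t, x) (0, w) * v b
        + fderiv ℝ (fun p => electricField A V p a) (t, x) (0, w) :=
  fderiv_sum_mul_add_apply (fun b => (hasFDerivAt_magneticField_apply hA a b _).differentiableAt)
    (hasFDerivAt_electricField_apply hA hV a _).differentiableAt v 0 w

theorem magneticField_bianchi (hA : ContDiff ℝ 2 A) (q : ℝ × (ι → ℝ)) (a b c : ι) :
    fderiv ℝ (fun p => magneticField A p a b) q (0, Pi.single c 1)
      + fderiv ℝ (fun p => magneticField A p b c) q (0, Pi.single a 1)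
      + fderiv ℝ (fun p => magneticField A p c a) q (0, Pi.single b 1) = 0 := by
  have hswap (i : ι) := (contDiff_pi.mp hA i).fderiv_fderiv_swap q
  simp only [(hasFDerivAt_magneticField_apply hA _ _ q).fderiv, sub_apply,
    ContinuousLinearMap.flip_apply]
  rw [hswap a (0, Pi.single b 1), hswap b (0, Pi.single c 1), hswap c (0, Pi.single a 1)]
  ring

theorem electricField_faraday (hA : ContDiff ℝ 2 A) (hV : ContDiff ℝ 2 V) (q : ℝ × (ι → ℝ))
    (a c : ι) :
    fderiv ℝ (fun p => electricField A V p a) q (0, Pi.single c 1)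
      - fderiv ℝ (fun p => electricField A V p c) q (0, Pi.single a 1)
      = fderiv ℝ (fun p => magneticField A p a c) q (1, 0) := by
  have hswap (i : ι) := (contDiff_pi.mp hA i).fderiv_fderiv_swap q
  simp only [(hasFDerivAt_magneticField_apply hA _ _ q).fderiv,
    (hasFDerivAt_electricField_apply hA hV _ q).fderiv, sub_apply,
    neg_apply, ContinuousLinearMap.flip_apply]
  rw [hV.fderiv_fderiv_swap q (0, Pi.single c 1), hswap a (0, Pi.single c 1),
    hswap c (0, Pi.single a 1)]
  ring

theorem sum_fderiv_magneticField_mul_antisymm (hA : ContDiff ℝ 2 A) (q : ℝ × (ι → ℝ))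
    (v : ι → ℝ) (a c : ι) :
    ∑ b, fderiv ℝ (fun p => magneticField A p a b) q (0, Pi.single c 1) * v b
      - ∑ b, fderiv ℝ (fun p => magneticField A p c b) q (0, Pi.single a 1) * v b
      = ∑ b, v b * fderiv ℝ (fun p => magneticField A p a c) q (0, Pi.single b 1) := by
  rw [← sum_sub_distrib]
  refine sum_congr rfl fun b _ => ?_
  have hB := magneticField_bianchi hA q a b c
  rw [fderiv_magneticField_apply_swap _ _ a c] at hB
  rw [fderiv_magneticField_apply_swap _ _ b c]
  linear_combination v b * hB

end Electromagnetism

theorem jacobi_endomorphism_symmetric_general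
    (n : ℕ)
    (A : ℝ × (Fin n → ℝ) → (Fin n → ℝ)) (V : ℝ × (Fin n → ℝ) → ℝ)
    (hA : ContDiff ℝ 2 A) (hV : ContDiff ℝ 2 V)
    (F : ℝ × (Fin n → ℝ) × (Fin n → ℝ) → (Fin n → ℝ))
    (hF : ∀ (t : ℝ) (x v : Fin n → ℝ) (a : Fin n),
      F (t, x, v) a =
        ∑ b, (fderiv ℝ (fun p : ℝ × (Fin n → ℝ) => A p b) (t, x) (0, Pi.single a 1)
              - fderiv ℝ (fun p : ℝ × (Fin n → ℝ) => A p a) (t, x) (0, Pi.single b 1)) * v b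
        - fderiv ℝ V (t, x) (0, Pi.single a 1)
        - fderiv ℝ (fun p : ℝ × (Fin n → ℝ) => A p a) (t, x) (1, 0))
    (Γ : ℝ × (Fin n → ℝ) → Matrix (Fin n) (Fin n) ℝ)
    (hΓ : ∀ (t : ℝ) (x : Fin n → ℝ) (a b : Fin n),
      Γ (t, x) a b =
        (1/2) * (fderiv ℝ (fun p : ℝ × (Fin n → ℝ) => A p a) (t, x) (0, Pi.single b 1)
               - fderiv ℝ (fun p : ℝ × (Fin n → ℝ) => A p b) (t, x) (0, Pi.single a 1)))
    (Φ : ℝ × (Fin n → ℝ) × (Fin n → ℝ) → Matrix (Fin n) (Fin n) ℝ)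
    (hΦ : ∀ (t : ℝ) (x v : Fin n → ℝ) (a c : Fin n),
      Φ (t, x, v) a c =
        - fderiv ℝ (fun p : ℝ × (Fin n → ℝ) × (Fin n → ℝ) => F p a) (t, x, v)
            (0, Pi.single c 1, 0)
        - ∑ b, Γ (t, x) a b * Γ (t, x) b c
        - (fderiv ℝ (fun p : ℝ × (Fin n → ℝ) => Γ p a c) (t, x) (1, 0)
           + ∑ b, v b * fderiv ℝ (fun p : ℝ × (Fin n → ℝ) => Γ p a c) (t, x)
               (0, Pi.single b 1))) :
    ∀ (t : ℝ) (x v : Fin n → ℝ) (a c : Fin n),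
      Φ (t, x, v) a c = Φ (t, x, v) c a := by
  intro t x v a c
  obtain rfl : F = lorentzForce A V := by
    funext ⟨t, x, v⟩ a
    rw [hF]
    simp only [lorentzForce, magneticField, electricField, Matrix.of_apply]
    ring
  have hΓB (q : ℝ × (Fin n → ℝ)) : Γ q = -(1/2 : ℝ) • magneticField A q := by
    ext a b
    rw [hΓ]
    simp only [magneticField, Matrix.smul_apply, Matrix.of_apply, smul_eq_mul]
    ring
  have hdΓ (a c : Fin n) (u : ℝ × (Fin n → ℝ)) : fderiv ℝ (fun p => Γ p a c) (t, x) u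
      = -(1/2) * fderiv ℝ (fun p => magneticField A p a c) (t, x) u := by
    simp only [hΓB, Matrix.smul_apply, smul_eq_mul,
      fderiv_const_mul (hasFDerivAt_magneticField_apply hA a c _).differentiableAt,
      smul_apply]
  have hΓΓ : ∑ b, Γ (t, x) a b * Γ (t, x) b c = ∑ b, Γ (t, x) c b * Γ (t, x) b a := by
    simp only [← Matrix.mul_apply]
    refine (Matrix.isSymm_mul_self_of_transpose_eq_neg ?_).apply c a
    rw [hΓB, Matrix.transpose_smul, magneticField_transpose, smul_neg, neg_smul]
  rw [hΦ, hΦ, fderiv_lorentzForce_apply hA hV, fderiv_lorentzForce_apply hA hV, hΓΓ]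
  simp only [hdΓ, mul_left_comm (v _), ← mul_sum, fderiv_magneticField_apply_swap _ _ a c,
    mul_neg, sum_neg_distrib]
  linear_combination -sum_fderiv_magneticField_mul_antisymm hA (t, x) v a c
    - electricField_faraday hA hV (t, x) a c

theorem jacobi_endomorphism_symmetric
    (n : ℕ) (hn : 1 ≤ n)
    (A : ℝ × (Fin n → ℝ) → (Fin n → ℝ)) (V : ℝ × (Fin n → ℝ) → ℝ)
    (hA : ContDiff ℝ 2 A) (hV : ContDiff ℝ 2 V)
    (F : ℝ × (Fin n → ℝ) × (Fin n → ℝ) → (Fin n → ℝ))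
    (hF : ∀ (t : ℝ) (x v : Fin n → ℝ) (a : Fin n),
      F (t, x, v) a =
        ∑ b, (fderiv ℝ (fun p : ℝ × (Fin n → ℝ) => A p b) (t, x) (0, Pi.single a 1)
              - fderiv ℝ (fun p : ℝ × (Fin n → ℝ) => A p a) (t, x) (0, Pi.single b 1)) * v b
        - fderiv ℝ V (t, x) (0, Pi.single a 1)
        - fderiv ℝ (fun p : ℝ × (Fin n → ℝ) => A p a) (t, x) (1, 0))
    (Γ : ℝ × (Fin n → ℝ) → Matrix (Fin n) (Fin n) ℝ)
    (hΓ : ∀ (t : ℝ) (x : Fin n → ℝ) (a b : Fin n),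
      Γ (t, x) a b =
        (1/2) * (fderiv ℝ (fun p : ℝ × (Fin n → ℝ) => A p a) (t, x) (0, Pi.single b 1)
               - fderiv ℝ (fun p : ℝ × (Fin n → ℝ) => A p b) (t, x) (0, Pi.single a 1)))
    (Φ : ℝ × (Fin n → ℝ) × (Fin n → ℝ) → Matrix (Fin n) (Fin n) ℝ)
    (hΦ : ∀ (t : ℝ) (x v : Fin n → ℝ) (a c : Fin n),
      Φ (t, x, v) a c =
        - fderiv ℝ (fun p : ℝ × (Fin n → ℝ) × (Fin n → ℝ) => F p a) (t, x, v)
            (0, Pi.single c 1, 0)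
        - ∑ b, Γ (t, x) a b * Γ (t, x) b c
        - (fderiv ℝ (fun p : ℝ × (Fin n → ℝ) => Γ p a c) (t, x) (1, 0)
           + ∑ b, v b * fderiv ℝ (fun p : ℝ × (Fin n → ℝ) => Γ p a c) (t, x)
               (0, Pi.single b 1))) :
    ∀ (t : ℝ) (x v : Fin n → ℝ) (a c : Fin n),
      Φ (t, x, v) a c = Φ (t, x, v) c a :=
  jacobi_endomorphism_symmetric_general n A V hA hV F hF Γ hΓ Φ hΦ
end

section
/- Let n ≥ 1, let g : ℝ → M_n(ℝ) be differentiable and Γ : ℝ → M_n(ℝ) be such that for all t: Γ(t)ᵀ = −Γ(t), g(t)ᵀ = g(t), and g'(t) = g(t)Γ(t) + (g(t)Γ(t))ᵀ. Then for every natural number k, the function t ↦ tr(g(t)^k) is constant on ℝ; in particular the trace of g(t) is constant. -/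
open Matrix

/-! Since `Γ` is skew and `g` symmetric, `(g Γ)ᵀ = -Γ g`, so `g` satisfies the Lax equation
`g' = g Γ - Γ g`. By the Leibniz rule every power then satisfies `(g ^ k)' = g ^ k Γ - Γ g ^ k`,
whose trace vanishes because `tr (A B) = tr (B A)`. -/

section EntrywiseDeriv

variable {𝕜 : Type*} [NontriviallyNormedField 𝕜] {l m n : Type*} [Fintype m]

theorem hasDerivAt_matrix_mul_apply {A : 𝕜 → Matrix l m 𝕜} {B : 𝕜 → Matrix m n 𝕜}
    {A' : Matrix l m 𝕜} {B' : Matrix m n 𝕜} {t : 𝕜}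
    (hA : ∀ i k, HasDerivAt (fun s => A s i k) (A' i k) t)
    (hB : ∀ k j, HasDerivAt (fun s => B s k j) (B' k j) t) (i : l) (j : n) :
    HasDerivAt (fun s => (A s * B s) i j) ((A' * B t + A t * B') i j) t := by
  rw [Matrix.add_apply, mul_apply, mul_apply, ← Finset.sum_add_distrib]
  simp only [mul_apply]
  exact HasDerivAt.fun_sum fun k _ => (hA i k).mul (hB k j)

theorem hasDerivAt_matrix_trace {A : 𝕜 → Matrix m m 𝕜} {A' : Matrix m m 𝕜} {t : 𝕜}
    (hA : ∀ i j, HasDerivAt (fun s => A s i j) (A' i j) t) :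
    HasDerivAt (fun s => (A s).trace) A'.trace t :=
  HasDerivAt.fun_sum fun i _ => hA i i

end EntrywiseDeriv

section Lax

variable {𝕜 : Type*} [NontriviallyNormedField 𝕜] {n : Type*} [Fintype n] [DecidableEq n]
  {g L : 𝕜 → Matrix n n 𝕜}

theorem hasDerivAt_pow_apply_of_lax
    (hg : ∀ t i j, HasDerivAt (fun s => g s i j) ((g t * L t - L t * g t) i j) t)
    (k : ℕ) (t : 𝕜) (i j : n) :
    HasDerivAt (fun s => (g s ^ k) i j) ((g t ^ k * L t - L t * g t ^ k) i j) t := by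
  induction k generalizing i j with
  | zero => simpa using hasDerivAt_const t ((1 : Matrix n n 𝕜) i j)
  | succ k ih =>
    have leibniz : g t ^ (k + 1) * L t - L t * g t ^ (k + 1)
        = (g t ^ k * L t - L t * g t ^ k) * g t + g t ^ k * (g t * L t - L t * g t) := by
      rw [pow_succ]; noncomm_ring
    rw [leibniz]
    simp_rw [pow_succ]
    exact hasDerivAt_matrix_mul_apply ih (hg t) i j

theorem hasDerivAt_trace_pow_of_lax
    (hg : ∀ t i j, HasDerivAt (fun s => g s i j) ((g t * L t - L t * g t) i j) t)
    (k : ℕ) (t : 𝕜) :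
    HasDerivAt (fun s => (g s ^ k).trace) 0 t := by
  have h := hasDerivAt_matrix_trace (hasDerivAt_pow_apply_of_lax hg k t)
  rwa [trace_sub, trace_mul_comm, sub_self] at h

theorem trace_pow_eq_of_lax {g L : ℝ → Matrix n n ℝ}
    (hg : ∀ t i j, HasDerivAt (fun s => g s i j) ((g t * L t - L t * g t) i j) t)
    (k : ℕ) (s t : ℝ) :
    (g s ^ k).trace = (g t ^ k).trace :=
  is_const_of_deriv_eq_zero (fun x => (hasDerivAt_trace_pow_of_lax hg k x).differentiableAt)
    (fun x => (hasDerivAt_trace_pow_of_lax hg k x).deriv) s t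

end Lax

theorem mul_add_transpose_mul_eq_lax {R n : Type*} [CommRing R] [Fintype n]
    {g Γ : Matrix n n R} (hΓ : Γᵀ = -Γ) (hg : gᵀ = g) :
    g * Γ + (g * Γ)ᵀ = g * Γ - Γ * g := by
  rw [transpose_mul, hΓ, hg, neg_mul, sub_eq_add_neg]

theorem traces_of_powers_constant_general
    (n : ℕ)
    (g Γ : ℝ → Matrix (Fin n) (Fin n) ℝ)
    (hΓskew : ∀ t, (Γ t)ᵀ = -Γ t)
    (hgsymm : ∀ t, (g t)ᵀ = g t)
    (hg : ∀ (t : ℝ) (i j : Fin n),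
      HasDerivAt (fun s => g s i j) ((g t * Γ t + (g t * Γ t)ᵀ) i j) t) :
    (∀ (k : ℕ) (s t : ℝ), (g s ^ k).trace = (g t ^ k).trace)
    ∧ (∀ s t : ℝ, (g s).trace = (g t).trace) := by
  have hlax : ∀ (t : ℝ) (i j : Fin n),
      HasDerivAt (fun s => g s i j) ((g t * Γ t - Γ t * g t) i j) t := fun t =>
    mul_add_transpose_mul_eq_lax (hΓskew t) (hgsymm t) ▸ hg t
  refine ⟨trace_pow_eq_of_lax hlax, fun s t => ?_⟩
  simpa using trace_pow_eq_of_lax hlax 1 s t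

theorem traces_of_powers_constant
    (n : ℕ) (hn : 1 ≤ n)
    (g Γ : ℝ → Matrix (Fin n) (Fin n) ℝ)
    (hΓskew : ∀ t, (Γ t)ᵀ = -Γ t)
    (hgsymm : ∀ t, (g t)ᵀ = g t)
    (hg : ∀ (t : ℝ) (i j : Fin n),
      HasDerivAt (fun s => g s i j) ((g t * Γ t + (g t * Γ t)ᵀ) i j) t) :
    (∀ (k : ℕ) (s t : ℝ), (g s ^ k).trace = (g t ^ k).trace)
    ∧ (∀ s t : ℝ, (g s).trace = (g t).trace) :=
  traces_of_powers_constant_general n g Γ hΓskew hgsymm hg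
end

section
/- Let σ : ℝ → ℝ be differentiable, let a₁, a₂, b : ℝ → ℝ, and let V : ℝ × ℝ² → ℝ be twice continuously differentiable in the space variables. Set A(t,x) = (σ(t)x₂, −σ(t)x₁), Γ(t) = [[0, σ(t)],[−σ(t), 0]], and g(t) = [[a₁(t), b(t)],[b(t), a₂(t)]]. Then at every (t,x) ∈ ℝ × ℝ², the 2×2 matrix g(t)·M(t,x) is symmetric, where M_{cb}(t,x) = ∂²V/∂x^c∂x^b(t,x) + (1/2)(∂²A^c/∂t∂x^b + ∂²A^b/∂t∂x^c)(t,x) − (Γ(t)²)_{cb}, if and only if b(t)·(∂²V/∂x₂² − ∂²V/∂x₁²)(t,x) = (a₂(t) − a₁(t))·(∂²V/∂x₁∂x₂)(t,x). -/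
/-!
Writing `A (s, x) = Γ s *ᵥ x` with `Γ s` skew, the Jacobian of `A` in `x` is `Γ s`, so the
symmetrized mixed derivative of `A` is the symmetric part of `Γ'`, which vanishes; moreover
`Γ² = -σ² • 1`. Hence `M = Hess V + σ² • 1`. Since `g` is symmetric, the scalar part of `M`
does not affect the symmetry of `g * M`, and for the symmetric `2 × 2` Hessian the symmetry of
`g * Hess V` is the single equation of the theorem.
-/

open Matrix

theorem Matrix.isSymm_iff_fin_two {α : Type*} {N : Matrix (Fin 2) (Fin 2) α} :
    N.IsSymm ↔ N 0 1 = N 1 0 := by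
  simp [IsSymm.ext_iff, Fin.forall_fin_two, eq_comm]

theorem fderiv_fderiv_apply_comm {E F : Type*} [NormedAddCommGroup E] [NormedSpace ℝ E]
    [NormedAddCommGroup F] [NormedSpace ℝ F] {f : E → F} {x : E} (hf : ContDiffAt ℝ 2 f x)
    (v w : E) :
    fderiv ℝ (fun y => fderiv ℝ f y v) x w = fderiv ℝ (fun y => fderiv ℝ f y w) x v := by
  have hd : DifferentiableAt ℝ (fderiv ℝ f) x :=
    (hf.fderiv_right (m := 1) le_rfl).differentiableAt one_ne_zero
  rw [fderiv_clm_apply hd (differentiableAt_const v), fderiv_clm_apply hd (differentiableAt_const w)]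
  simpa using hf.isSymmSndFDerivAt (by simp [minSmoothness_of_isRCLikeNormedField]) w v

theorem fderiv_mulVec_apply_single {𝕜 n : Type*} [NontriviallyNormedField 𝕜] [CompleteSpace 𝕜]
    [Fintype n] [DecidableEq n] (S : Matrix n n 𝕜) (x : n → 𝕜) (i j : n) :
    fderiv 𝕜 (fun y => (S *ᵥ y) i) x (Pi.single j 1) = S i j := by
  let L : (n → 𝕜) →L[𝕜] 𝕜 := LinearMap.toContinuousLinearMap (LinearMap.proj i ∘ₗ S.mulVecLin)
  have hL : (fun y => (S *ᵥ y) i) = L := rfl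
  rw [hL, L.fderiv]
  simp [L]

theorem deriv_fderiv_mulVec_add_swap_eq_zero {𝕜 n : Type*} [NontriviallyNormedField 𝕜]
    [CompleteSpace 𝕜] [Fintype n] [DecidableEq n] {S : 𝕜 → Matrix n n 𝕜}
    (hS : ∀ s, (S s)ᵀ = -S s) (x : n → 𝕜) (t : 𝕜) (i j : n) :
    deriv (fun s => fderiv 𝕜 (fun y => (S s *ᵥ y) i) x (Pi.single j 1)) t
      + deriv (fun s => fderiv 𝕜 (fun y => (S s *ᵥ y) j) x (Pi.single i 1)) t = 0 := by
  have hji : ∀ s, S s j i = -S s i j := fun s => by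
    simpa using congrFun (congrFun (hS s) i) j
  simp only [fderiv_mulVec_apply_single, hji, deriv.fun_neg, add_neg_cancel]

theorem Matrix.skew_fin_two_sq {R : Type*} [CommRing R] (s : R) :
    !![0, s; -s, 0] ^ 2 = -(s ^ 2) • (1 : Matrix (Fin 2) (Fin 2) R) := by
  rw [sq, mul_fin_two, one_fin_two, smul_of]
  ext i j; fin_cases i <;> fin_cases j <;> simp [sq]

theorem Matrix.isSymm_fin_two_mul_add_smul_one_iff {R : Type*} [CommRing R] (a₁ a₂ b c : R)
    {H : Matrix (Fin 2) (Fin 2) R} (hH : H 0 1 = H 1 0) :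
    (!![a₁, b; b, a₂] * (H + c • 1)).IsSymm ↔ b * (H 1 1 - H 0 0) = (a₂ - a₁) * H 0 1 := by
  set N := !![a₁, b; b, a₂] * (H + c • 1)
  have hN : N 0 1 - N 1 0 = b * (H 1 1 - H 0 0) - (a₂ - a₁) * H 0 1 := by
    simp only [N, cons_mul, empty_mul, Equiv.symm_apply_apply, of_apply, cons_val', vecMul,
      dotProduct, add_apply, smul_apply, smul_eq_mul, Fin.sum_univ_two, cons_val_zero, cons_val_one,
      cons_val_fin_one, one_apply_ne, one_apply_eq, zero_ne_one, one_ne_zero, ne_eq,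
      not_false_eq_true, mul_zero, add_zero, mul_one]
    linear_combination a₂ * hH
  rw [isSymm_iff_fin_two, ← sub_eq_zero, hN, sub_eq_zero]

theorem two_dim_Phi_condition_general
    (σ : ℝ → ℝ)
    (a₁ a₂ b : ℝ → ℝ)
    (V : ℝ × (Fin 2 → ℝ) → ℝ)
    (hV : ∀ t : ℝ, ContDiff ℝ 2 (fun x : Fin 2 → ℝ => V (t, x)))
    (A : ℝ × (Fin 2 → ℝ) → (Fin 2 → ℝ))
    (hA : ∀ (t : ℝ) (x : Fin 2 → ℝ), A (t, x) = ![σ t * x 1, -(σ t * x 0)])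
    (Γ : ℝ → Matrix (Fin 2) (Fin 2) ℝ)
    (hΓ : ∀ t, Γ t = !![0, σ t; -(σ t), 0])
    (g : ℝ → Matrix (Fin 2) (Fin 2) ℝ)
    (hg : ∀ t, g t = !![a₁ t, b t; b t, a₂ t])
    (M : ℝ → (Fin 2 → ℝ) → Matrix (Fin 2) (Fin 2) ℝ)
    (hM : ∀ (t : ℝ) (x : Fin 2 → ℝ), M t x = Matrix.of fun c b' =>
      fderiv ℝ (fun x' : Fin 2 → ℝ =>
          fderiv ℝ (fun x'' : Fin 2 → ℝ => V (t, x'')) x' (Pi.single b' 1)) x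
        (Pi.single c 1)
      + (1/2) * (deriv (fun s : ℝ =>
            fderiv ℝ (fun x' : Fin 2 → ℝ => A (s, x') c) x (Pi.single b' 1)) t
          + deriv (fun s : ℝ =>
            fderiv ℝ (fun x' : Fin 2 → ℝ => A (s, x') b') x (Pi.single c 1)) t)
      - (Γ t ^ 2) c b') :
    ∀ (t : ℝ) (x : Fin 2 → ℝ),
      (g t * M t x)ᵀ = g t * M t x
      ↔ b t * (fderiv ℝ (fun x' : Fin 2 → ℝ =>
            fderiv ℝ (fun x'' : Fin 2 → ℝ => V (t, x'')) x' (Pi.single 1 1)) x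
              (Pi.single 1 1)
          - fderiv ℝ (fun x' : Fin 2 → ℝ =>
            fderiv ℝ (fun x'' : Fin 2 → ℝ => V (t, x'')) x' (Pi.single 0 1)) x
              (Pi.single 0 1))
        = (a₂ t - a₁ t) * fderiv ℝ (fun x' : Fin 2 → ℝ =>
            fderiv ℝ (fun x'' : Fin 2 → ℝ => V (t, x'')) x' (Pi.single 1 1)) x
              (Pi.single 0 1) := by
  have hAΓ : ∀ s y, A (s, y) = Γ s *ᵥ y := fun s y => by
    rw [hA, hΓ]; ext i; fin_cases i <;> simp [mulVec, dotProduct]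
  have hΓ_skew : ∀ s, (Γ s)ᵀ = -Γ s := fun s => by
    rw [hΓ]; ext i j; fin_cases i <;> fin_cases j <;> simp
  intro t x
  set H : Matrix (Fin 2) (Fin 2) ℝ := of fun c b' =>
    fderiv ℝ (fun x' => fderiv ℝ (fun x'' => V (t, x'')) x' (Pi.single b' 1)) x (Pi.single c 1)
  have hH : H 0 1 = H 1 0 := fderiv_fderiv_apply_comm (hV t).contDiffAt _ _
  have hMH : M t x = H + σ t ^ 2 • 1 := by
    ext c b'
    rw [hM]
    simp only [of_apply, hAΓ]
    rw [deriv_fderiv_mulVec_add_swap_eq_zero hΓ_skew, hΓ t, skew_fin_two_sq]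
    simp [H]
  rw [← IsSymm, hMH, hg]
  exact isSymm_fin_two_mul_add_smul_one_iff _ _ _ _ hH

theorem two_dim_Phi_condition
    (σ : ℝ → ℝ) (hσ : Differentiable ℝ σ)
    (a₁ a₂ b : ℝ → ℝ)
    (V : ℝ × (Fin 2 → ℝ) → ℝ)
    (hV : ∀ t : ℝ, ContDiff ℝ 2 (fun x : Fin 2 → ℝ => V (t, x)))
    (A : ℝ × (Fin 2 → ℝ) → (Fin 2 → ℝ))
    (hA : ∀ (t : ℝ) (x : Fin 2 → ℝ), A (t, x) = ![σ t * x 1, -(σ t * x 0)])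
    (Γ : ℝ → Matrix (Fin 2) (Fin 2) ℝ)
    (hΓ : ∀ t, Γ t = !![0, σ t; -(σ t), 0])
    (g : ℝ → Matrix (Fin 2) (Fin 2) ℝ)
    (hg : ∀ t, g t = !![a₁ t, b t; b t, a₂ t])
    (M : ℝ → (Fin 2 → ℝ) → Matrix (Fin 2) (Fin 2) ℝ)
    (hM : ∀ (t : ℝ) (x : Fin 2 → ℝ), M t x = Matrix.of fun c b' =>
      fderiv ℝ (fun x' : Fin 2 → ℝ =>
          fderiv ℝ (fun x'' : Fin 2 → ℝ => V (t, x'')) x' (Pi.single b' 1)) x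
        (Pi.single c 1)
      + (1/2) * (deriv (fun s : ℝ =>
            fderiv ℝ (fun x' : Fin 2 → ℝ => A (s, x') c) x (Pi.single b' 1)) t
          + deriv (fun s : ℝ =>
            fderiv ℝ (fun x' : Fin 2 → ℝ => A (s, x') b') x (Pi.single c 1)) t)
      - (Γ t ^ 2) c b') :
    ∀ (t : ℝ) (x : Fin 2 → ℝ),
      (g t * M t x)ᵀ = g t * M t x
      ↔ b t * (fderiv ℝ (fun x' : Fin 2 → ℝ =>
            fderiv ℝ (fun x'' : Fin 2 → ℝ => V (t, x'')) x' (Pi.single 1 1)) x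
              (Pi.single 1 1)
          - fderiv ℝ (fun x' : Fin 2 → ℝ =>
            fderiv ℝ (fun x'' : Fin 2 → ℝ => V (t, x'')) x' (Pi.single 0 1)) x
              (Pi.single 0 1))
        = (a₂ t - a₁ t) * fderiv ℝ (fun x' : Fin 2 → ℝ =>
            fderiv ℝ (fun x'' : Fin 2 → ℝ => V (t, x'')) x' (Pi.single 1 1)) x
              (Pi.single 0 1) :=
  two_dim_Phi_condition_general σ a₁ a₂ b V hV A hA Γ hΓ g hg M hM
end

section
/- Let σ : ℝ → ℝ, let α : ℝ → ℝ be differentiable with α'(t) = −2σ(t) for all t, and let B, C be real constants. Define g(t) = (1/2)·[[C + B cos α(t), −B sin α(t)], [−B sin α(t), C − B cos α(t)]] and Γ(t) = [[0, σ(t)], [−σ(t), 0]]. Then g'(t) = g(t)Γ(t) − Γ(t)g(t) for all t ∈ ℝ; equivalently, g'(t) = g(t)Γ(t) + (g(t)Γ(t))ᵀ. -/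
open Matrix

/- STATEMENT 14: With α' = −2σ, the matrix
g(t) = (1/2)[[C + B cos α, −B sin α],[−B sin α, C − B cos α]] satisfies
g' = gΓ − Γg, equivalently g' = gΓ + (gΓ)ᵀ, for Γ(t) = [[0,σ],[−σ,0]]. -/
theorem two_dim_multiplier_satisfies_lax
    (σ α : ℝ → ℝ) (hα : ∀ t, HasDerivAt α (-2 * σ t) t) (B C : ℝ)
    (g Γ : ℝ → Matrix (Fin 2) (Fin 2) ℝ)
    (hg : ∀ t, g t = (1/2 : ℝ) •
      !![C + B * Real.cos (α t), -(B * Real.sin (α t));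
         -(B * Real.sin (α t)), C - B * Real.cos (α t)])
    (hΓ : ∀ t, Γ t = !![0, σ t; -(σ t), 0]) :
    ∀ (t : ℝ) (i j : Fin 2),
      HasDerivAt (fun s => g s i j) ((g t * Γ t - Γ t * g t) i j) t ∧
      HasDerivAt (fun s => g s i j) ((g t * Γ t + (g t * Γ t)ᵀ) i j) t := by
  intro t i j
  have hc : HasDerivAt (fun s => Real.cos (α s)) (-Real.sin (α t) * (-2 * σ t)) t :=
    (Real.hasDerivAt_cos (α t)).comp t (hα t)
  have hs : HasDerivAt (fun s => Real.sin (α s)) (Real.cos (α t) * (-2 * σ t)) t :=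
    (Real.hasDerivAt_sin (α t)).comp t (hα t)
  have h00 : HasDerivAt (fun s => (2⁻¹ : ℝ) * (C + B * Real.cos (α s)))
      (B * Real.sin (α t) * σ t) t :=
    (((hc.const_mul B).const_add C).const_mul (2⁻¹ : ℝ)).congr_deriv (by ring)
  have h01 : HasDerivAt (fun s => -((2⁻¹ : ℝ) * (B * Real.sin (α s))))
      (B * Real.cos (α t) * σ t) t :=
    (((hs.const_mul B).const_mul (2⁻¹ : ℝ)).neg).congr_deriv (by ring)
  have h11 : HasDerivAt (fun s => (2⁻¹ : ℝ) * (C - B * Real.cos (α s)))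
      (-(B * Real.sin (α t) * σ t)) t := by
    have h := (((hc.const_mul B).neg.const_add C).const_mul (2⁻¹ : ℝ)).congr_deriv
      (show (2⁻¹ : ℝ) * -(B * (-Real.sin (α t) * (-2 * σ t))) = -(B * Real.sin (α t) * σ t)
        by ring)
    simpa [sub_eq_add_neg] using h
  fin_cases i <;> fin_cases j <;> constructor <;>
    · simp [hg, hΓ, Matrix.mul_apply, Fin.sum_univ_two, Matrix.vecHead, Matrix.transpose_apply]
      first
        | exact h00.congr_deriv (by ring)
        | exact h01.congr_deriv (by ring)
        | exact h11.congr_deriv (by ring)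
end

section
/- Let ρ, a, b, c, ã, b̃ : ℝ → ℝ be differentiable functions satisfying for all t: (ρc)' = 2ρ ã b; (ρ(c + b² − a²))' = −2ρ b̃ a; (ρ(c + b²))' = 2ρ(b̃ a − ã b); (ρ a b)' = ρ(b b̃ − a ã); (ρ a)' = ρ(b̃(1 − a²) + ã a b); (ρ b)' = −ρ(ã(1 − b²) + b̃ a b). Assume moreover that ρ(t) ≠ 0 and a(t)² ≠ b(t)² for all t. Then for all t: a(t)·b̃(t) = b(t)·ã(t), ρ'(t) = 0 (so ρ is constant), a'(t) = b̃(t), b'(t) = −ã(t), and the functions a² + b² and c + b² are constant. -/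
/-!
Writing `P = ρ (a b̃ − b ã)`, the combinations `(2) − (3) + 2a·(5)` and `(1) − (3) + 2b·(6)` of the
product-rule expansions of the ODEs eliminate `c'`, `a'`, `b'` and leave the linear system
`ρ' a² + 2(1 + a²) P = 0`, `ρ' b² + 2(1 + b²) P = 0` in the unknowns `ρ'` and `P`. Its determinant is
`2(a² − b²) ≠ 0`, so `ρ' = P = 0`; then (5), (6) and (3) reduce to `a' = b̃`, `b' = −ã` and
`(c + b²)' = 0`, and `(a² + b²)' = 2(a b̃ − b ã) = 0`.
-/

theorem eq_zero_and_eq_zero_of_sq_ne_sq {R : Type*} [CommRing R] [NoZeroDivisors R]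
    {x p A B : R} (hAB : A ^ 2 ≠ B ^ 2)
    (hA : x * A ^ 2 + (1 + A ^ 2) * p = 0) (hB : x * B ^ 2 + (1 + B ^ 2) * p = 0) :
    x = 0 ∧ p = 0 := by
  have hxp : x + p = 0 := by
    have h : (x + p) * (A ^ 2 - B ^ 2) = 0 := by linear_combination hA - hB
    exact (mul_eq_zero.mp h).resolve_right (sub_ne_zero.mpr hAB)
  have hp : p = 0 := by linear_combination hA - A ^ 2 * hxp
  exact ⟨by linear_combination hxp - hp, hp⟩

theorem multiplier_ode_pointwise {ρ ρ' a a' b b' c c' atil btil : ℝ}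
    (hρ : ρ ≠ 0) (hab : a ^ 2 ≠ b ^ 2)
    (e1 : ρ' * c + ρ * c' = 2 * ρ * atil * b)
    (e2 : ρ' * (c + b ^ 2 - a ^ 2) + ρ * (c' + 2 * b * b' - 2 * a * a') = -2 * ρ * btil * a)
    (e3 : ρ' * (c + b ^ 2) + ρ * (c' + 2 * b * b') = 2 * ρ * (btil * a - atil * b))
    (e5 : ρ' * a + ρ * a' = ρ * (btil * (1 - a ^ 2) + atil * a * b))
    (e6 : ρ' * b + ρ * b' = -(ρ * (atil * (1 - b ^ 2) + btil * a * b))) :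
    ρ' = 0 ∧ a * btil = b * atil ∧ a' = btil ∧ b' = -atil ∧ c' + 2 * b * b' = 0 := by
  obtain ⟨hρ', hP⟩ := eq_zero_and_eq_zero_of_sq_ne_sq (x := ρ')
    (p := 2 * (ρ * (a * btil - b * atil))) hab
    (by linear_combination e2 - e3 + 2 * a * e5) (by linear_combination e1 - e3 + 2 * b * e6)
  have hcross : a * btil - b * atil = 0 :=
    (mul_eq_zero.mp ((mul_eq_zero.mp hP).resolve_left two_ne_zero)).resolve_left hρ
  refine ⟨hρ', sub_eq_zero.mp hcross, ?_, ?_, ?_⟩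
  · exact mul_left_cancel₀ hρ (by linear_combination e5 - a * hρ' - ρ * a * hcross)
  · exact mul_left_cancel₀ hρ (by linear_combination e6 - b * hρ' - ρ * b * hcross)
  · refine (mul_eq_zero.mp ?_).resolve_left hρ
    linear_combination e3 - (c + b ^ 2) * hρ' + 2 * ρ * hcross

theorem three_dim_multiplier_ode_consequences_general
    (ρ a b c atil btil : ℝ → ℝ)
    (hρ : Differentiable ℝ ρ) (ha : Differentiable ℝ a)
    (hb : Differentiable ℝ b) (hc : Differentiable ℝ c)
    (h1 : ∀ t, deriv (fun s => ρ s * c s) t = 2 * ρ t * atil t * b t)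
    (h2 : ∀ t, deriv (fun s => ρ s * (c s + b s ^ 2 - a s ^ 2)) t
      = -2 * ρ t * btil t * a t)
    (h3 : ∀ t, deriv (fun s => ρ s * (c s + b s ^ 2)) t
      = 2 * ρ t * (btil t * a t - atil t * b t))
    (h5 : ∀ t, deriv (fun s => ρ s * a s) t
      = ρ t * (btil t * (1 - a t ^ 2) + atil t * a t * b t))
    (h6 : ∀ t, deriv (fun s => ρ s * b s) t
      = -(ρ t * (atil t * (1 - b t ^ 2) + btil t * a t * b t)))
    (hρne : ∀ t, ρ t ≠ 0) (hab : ∀ t, a t ^ 2 ≠ b t ^ 2) :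
    (∀ t, a t * btil t = b t * atil t)
    ∧ (∀ t, deriv ρ t = 0) ∧ (∀ s t, ρ s = ρ t)
    ∧ (∀ t, deriv a t = btil t)
    ∧ (∀ t, deriv b t = -atil t)
    ∧ (∀ s t, a s ^ 2 + b s ^ 2 = a t ^ 2 + b t ^ 2)
    ∧ (∀ s t, c s + b s ^ 2 = c t + b t ^ 2) := by
  have pointwise (t : ℝ) := by
    have e1 := h1 t; have e2 := h2 t; have e3 := h3 t; have e5 := h5 t; have e6 := h6 t
    simp (disch := fun_prop) only [deriv_fun_mul, deriv_fun_add, deriv_fun_sub, deriv_fun_pow,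
      Nat.cast_ofNat, Nat.add_one_sub_one, pow_one] at e1 e2 e3 e5 e6
    exact multiplier_ode_pointwise (hρne t) (hab t) e1 e2 e3 e5 e6
  choose hρ' hcross ha' hb' hcb' using pointwise
  refine ⟨hcross, hρ', is_const_of_deriv_eq_zero hρ hρ', ha', hb', ?_, ?_⟩
  · refine is_const_of_deriv_eq_zero (by fun_prop) fun t => ?_
    simp (disch := fun_prop) only [deriv_fun_add, deriv_fun_pow, Nat.cast_ofNat,
      Nat.add_one_sub_one, pow_one, ha' t, hb' t]
    linear_combination 2 * hcross t
  · refine is_const_of_deriv_eq_zero (by fun_prop) fun t => ?_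
    simp (disch := fun_prop) only [deriv_fun_add, deriv_fun_pow, Nat.cast_ofNat,
      Nat.add_one_sub_one, pow_one]
    exact hcb' t

theorem three_dim_multiplier_ode_consequences
    (ρ a b c atil btil : ℝ → ℝ)
    (hρ : Differentiable ℝ ρ) (ha : Differentiable ℝ a)
    (hb : Differentiable ℝ b) (hc : Differentiable ℝ c)
    (hatil : Differentiable ℝ atil) (hbtil : Differentiable ℝ btil)
    (h1 : ∀ t, deriv (fun s => ρ s * c s) t = 2 * ρ t * atil t * b t)
    (h2 : ∀ t, deriv (fun s => ρ s * (c s + b s ^ 2 - a s ^ 2)) t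
      = -2 * ρ t * btil t * a t)
    (h3 : ∀ t, deriv (fun s => ρ s * (c s + b s ^ 2)) t
      = 2 * ρ t * (btil t * a t - atil t * b t))
    (h4 : ∀ t, deriv (fun s => ρ s * a s * b s) t
      = ρ t * (b t * btil t - a t * atil t))
    (h5 : ∀ t, deriv (fun s => ρ s * a s) t
      = ρ t * (btil t * (1 - a t ^ 2) + atil t * a t * b t))
    (h6 : ∀ t, deriv (fun s => ρ s * b s) t
      = -(ρ t * (atil t * (1 - b t ^ 2) + btil t * a t * b t)))
    (hρne : ∀ t, ρ t ≠ 0) (hab : ∀ t, a t ^ 2 ≠ b t ^ 2) :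
    (∀ t, a t * btil t = b t * atil t)
    ∧ (∀ t, deriv ρ t = 0) ∧ (∀ s t, ρ s = ρ t)
    ∧ (∀ t, deriv a t = btil t)
    ∧ (∀ t, deriv b t = -atil t)
    ∧ (∀ s t, a s ^ 2 + b s ^ 2 = a t ^ 2 + b t ^ 2)
    ∧ (∀ s t, c s + b s ^ 2 = c t + b t ^ 2) :=
  three_dim_multiplier_ode_consequences_general ρ a b c atil btil hρ ha hb hc h1 h2 h3 h5 h6 hρne
    hab
end
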